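/- Let C be a neural code on n neurons, let q be the map duplicating the first neuron, q(σ) = ι(σ) ∪ {Fin.last n} if (0 : Fin n) ∈ σ and q(σ) = ι(σ) otherwise, and let C' = {q(σ) | σ ∈ C}. Then for every σ ∈ Δ(C): if (0 : Fin n) ∈ σ, then Lk_{q(σ)}(Δ(C')) = {ι(ω) | ω ∈ Lk_σ(Δ(C))}; and if (0 : Fin n) ∉ σ, then Lk_{q(σ)}(Δ(C')) = Δ({q(ω) | ω ∈ Lk_σ(Δ(C))}), the simplicial complex generated by the image of the link under q. -/
import Mathlib


/-- The simplicial complex of a neural code. -/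
def simComp {V : Type*} (C : Set (Finset V)) : Set (Finset V) := {α | ∃ β ∈ C, α ⊆ β}

/-- The map sending `α ⊆ Fin n` to its image in `Fin (n+1)` under `Fin.castSucc`. -/
def iota {n : ℕ} (α : Finset (Fin n)) : Finset (Fin (n+1)) := α.image Fin.castSucc

/-- Duplicating the first neuron. -/
def dup {n : ℕ} [NeZero n] (σ : Finset (Fin n)) : Finset (Fin (n+1)) :=
  if (0 : Fin n) ∈ σ then iota σ ∪ {Fin.last n} else iota σ

/-- The link of `σ` in a family `K`. -/
def link {V : Type*} [DecidableEq V] (σ : Finset V) (K : Set (Finset V)) : Set (Finset V) :=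
  {ω ∈ K | ω ∩ σ = ∅ ∧ ω ∪ σ ∈ K}

section helpers
variable {n : ℕ}

lemma castSucc_mem_iota {y : Fin n} {a : Finset (Fin n)} :
    Fin.castSucc y ∈ iota a ↔ y ∈ a := by
  simp [iota, Fin.castSucc_inj]

lemma last_notMem_iota (a : Finset (Fin n)) : Fin.last n ∉ iota a := by
  simp only [iota, Finset.mem_image]
  rintro ⟨y, -, h⟩
  exact (Fin.castSucc_lt_last y).ne h

lemma iota_subset_iota {a b : Finset (Fin n)} : iota a ⊆ iota b ↔ a ⊆ b :=
  Finset.image_subset_image_iff (Fin.castSucc_injective n)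

lemma iota_union (a b : Finset (Fin n)) : iota (a ∪ b) = iota a ∪ iota b :=
  Finset.image_union _ _

lemma iota_inter (a b : Finset (Fin n)) : iota a ∩ iota b = iota (a ∩ b) :=
  (Finset.image_inter _ _ (Fin.castSucc_injective n)).symm

lemma iota_eq_empty {a : Finset (Fin n)} : iota a = ∅ ↔ a = ∅ :=
  Finset.image_eq_empty

noncomputable def res (τ : Finset (Fin (n+1))) : Finset (Fin n) :=
  τ.preimage Fin.castSucc (Fin.castSucc_injective n).injOn

lemma mem_res {a : Fin n} {τ : Finset (Fin (n+1))} : a ∈ res τ ↔ Fin.castSucc a ∈ τ :=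
  Finset.mem_preimage

lemma eq_iota_res {τ : Finset (Fin (n+1))} (h : Fin.last n ∉ τ) : τ = iota (res τ) := by
  ext x
  simp only [iota, Finset.mem_image, mem_res]
  constructor
  · intro hx
    have hne : x ≠ Fin.last n := fun he => h (he ▸ hx)
    exact ⟨x.castPred hne, by simpa [Fin.castSucc_castPred] using hx, Fin.castSucc_castPred _ _⟩
  · rintro ⟨y, hy, rfl⟩; exact mem_res.mp (Finset.mem_preimage.mpr hy)

lemma eq_iota_res_union {τ : Finset (Fin (n+1))} (h : Fin.last n ∈ τ) :
    τ = iota (res τ) ∪ {Fin.last n} := by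
  ext x
  simp only [Finset.mem_union, Finset.mem_singleton, iota, Finset.mem_image, mem_res]
  constructor
  · intro hx
    rcases eq_or_ne x (Fin.last n) with he | hne
    · exact Or.inr he
    · exact Or.inl ⟨x.castPred hne, by simpa [Fin.castSucc_castPred] using hx,
        Fin.castSucc_castPred _ _⟩
  · rintro (⟨y, hy, rfl⟩ | rfl)
    · exact hy
    · exact h

lemma simComp_down {V : Type*} {C : Set (Finset V)} {a b : Finset V}
    (h : a ⊆ b) (hb : b ∈ simComp C) : a ∈ simComp C := by
  obtain ⟨c, hc, hbc⟩ := hb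
  exact ⟨c, hc, h.trans hbc⟩

end helpers

section dupHelpers
variable {n : ℕ} [NeZero n]

lemma iota_subset_dup (a : Finset (Fin n)) : iota a ⊆ dup a := by
  unfold dup; split_ifs
  · exact Finset.subset_union_left
  · exact subset_rfl

lemma dup_mono {a b : Finset (Fin n)} (h : a ⊆ b) : dup a ⊆ dup b := by
  unfold dup; split_ifs with ha hb hb
  · exact Finset.union_subset_union_left (iota_subset_iota.mpr h)
  · exact absurd (h ha) hb
  · exact (iota_subset_iota.mpr h).trans Finset.subset_union_left
  · exact iota_subset_iota.mpr h

variable {C : Set (Finset (Fin n))}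

lemma iota_mem_simComp {a : Finset (Fin n)} :
    iota a ∈ simComp (dup '' C) ↔ a ∈ simComp C := by
  constructor
  · rintro ⟨β, ⟨b, hb, rfl⟩, hab⟩
    refine ⟨b, hb, fun x hx => ?_⟩
    have := hab (Finset.mem_image_of_mem _ hx : Fin.castSucc x ∈ iota a)
    unfold dup at this
    split_ifs at this with h
    · rcases Finset.mem_union.mp this with h' | h'
      · exact castSucc_mem_iota.mp h'
      · exact absurd (Finset.mem_singleton.mp h') (Fin.castSucc_lt_last x).ne
    · exact castSucc_mem_iota.mp this
  · rintro ⟨b, hb, hab⟩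
    exact ⟨dup b, ⟨b, hb, rfl⟩, (iota_subset_iota.mpr hab).trans (iota_subset_dup b)⟩

lemma iota_last_mem_simComp {a : Finset (Fin n)} :
    iota a ∪ {Fin.last n} ∈ simComp (dup '' C) ↔ insert 0 a ∈ simComp C := by
  constructor
  · rintro ⟨β, ⟨b, hb, rfl⟩, hab⟩
    have hlast : Fin.last n ∈ dup b := hab (Finset.mem_union_right _ (Finset.mem_singleton_self _))
    have h0b : (0 : Fin n) ∈ b := by
      by_contra h0b
      rw [dup, if_neg h0b] at hlast
      exact last_notMem_iota b hlast
    refine ⟨b, hb, Finset.insert_subset h0b (fun x hx => ?_)⟩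
    have hx' : Fin.castSucc x ∈ dup b :=
      hab (Finset.mem_union_left _ (Finset.mem_image_of_mem _ hx))
    rw [dup, if_pos h0b] at hx'
    rcases Finset.mem_union.mp hx' with h' | h'
    · exact castSucc_mem_iota.mp h'
    · exact absurd (Finset.mem_singleton.mp h') (Fin.castSucc_lt_last x).ne
  · rintro ⟨b, hb, hab⟩
    have h0b : (0 : Fin n) ∈ b := hab (Finset.mem_insert_self _ _)
    refine ⟨dup b, ⟨b, hb, rfl⟩, ?_⟩
    rw [dup, if_pos h0b]
    exact Finset.union_subset_union_left
      (iota_subset_iota.mpr ((Finset.subset_insert _ _).trans hab))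

end dupHelpers

theorem stmt_12 (n : ℕ) [NeZero n] (C : Set (Finset (Fin n)))
    (C' : Set (Finset (Fin (n+1)))) (hC' : C' = dup '' C)
    (σ : Finset (Fin n)) (hσ : σ ∈ simComp C) :
    ((0 : Fin n) ∈ σ → link (dup σ) (simComp C') = iota '' link σ (simComp C)) ∧
    ((0 : Fin n) ∉ σ →
      link (dup σ) (simComp C') = simComp (dup '' link σ (simComp C))) := by
  subst hC'
  constructor
  · -- Case 0 ∈ σ
    intro h0
    have hdσ : dup σ = iota σ ∪ {Fin.last n} := if_pos h0
    ext ω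
    simp only [link, Set.mem_setOf_eq, Set.mem_image]
    constructor
    · rintro ⟨hω, hdisj, hub⟩
      have hd := Finset.disjoint_left.mp (Finset.disjoint_iff_inter_eq_empty.mpr hdisj)
      have hlast : Fin.last n ∉ ω := fun hl =>
        hd hl (by rw [hdσ]; exact Finset.mem_union_right _ (Finset.mem_singleton_self _))
      have hωeq : ω = iota (res ω) := eq_iota_res hlast
      refine ⟨res ω, ⟨?_, ?_, ?_⟩, hωeq.symm⟩
      · exact iota_mem_simComp.mp (hωeq ▸ hω)
      · rw [Finset.eq_empty_iff_forall_notMem]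
        rintro x hx
        obtain ⟨hx1, hx2⟩ := Finset.mem_inter.mp hx
        exact hd (mem_res.mp hx1)
          (by rw [hdσ]; exact Finset.mem_union_left _ (castSucc_mem_iota.mpr hx2))
      · have heq : ω ∪ dup σ = iota (res ω ∪ σ) ∪ {Fin.last n} := by
          rw [hdσ, iota_union, ← hωeq, Finset.union_assoc]
        have := iota_last_mem_simComp.mp (heq ▸ hub)
        rwa [Finset.insert_eq_self.mpr (Finset.mem_union_right _ h0)] at this
    · rintro ⟨ω₀, ⟨h1, h2, h3⟩, rfl⟩
      have hd2 := Finset.disjoint_left.mp (Finset.disjoint_iff_inter_eq_empty.mpr h2)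
      refine ⟨iota_mem_simComp.mpr h1, ?_, ?_⟩
      · rw [Finset.eq_empty_iff_forall_notMem]
        intro x hx
        obtain ⟨hx1, hx2⟩ := Finset.mem_inter.mp hx
        rw [hdσ] at hx2
        obtain ⟨y, hy, rfl⟩ := Finset.mem_image.mp hx1
        rcases Finset.mem_union.mp hx2 with h' | h'
        · exact hd2 hy (castSucc_mem_iota.mp h')
        · exact (Fin.castSucc_lt_last y).ne (Finset.mem_singleton.mp h')
      · have heq : iota ω₀ ∪ dup σ = iota (ω₀ ∪ σ) ∪ {Fin.last n} := by
          rw [hdσ, iota_union, Finset.union_assoc]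
        rw [heq]
        exact iota_last_mem_simComp.mpr
          (by rwa [Finset.insert_eq_self.mpr (Finset.mem_union_right _ h0)])
  · -- Case 0 ∉ σ
    intro h0
    have hdσ : dup σ = iota σ := if_neg h0
    ext ω
    simp only [link, Set.mem_setOf_eq]
    constructor
    · rintro ⟨hω, hdisj, hub⟩
      have hd := Finset.disjoint_left.mp (Finset.disjoint_iff_inter_eq_empty.mpr hdisj)
      rw [hdσ] at hd hub
      by_cases hlast : Fin.last n ∈ ω
      · -- ω = iota (res ω) ∪ {last}
        have hωeq : ω = iota (res ω) ∪ {Fin.last n} := eq_iota_res_union hlast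
        have hresd : ∀ x ∈ res ω, x ∉ σ := fun x hx hxσ =>
          hd (mem_res.mp hx) (castSucc_mem_iota.mpr hxσ)
        have hmem : insert 0 (res ω) ∈ simComp C :=
          iota_last_mem_simComp.mp (by rw [← hωeq]; exact hω)
        have hu : ω ∪ iota σ = iota (res ω ∪ σ) ∪ {Fin.last n} := by
          conv_lhs => rw [hωeq]
          rw [iota_union, Finset.union_right_comm]
        have humem : insert 0 (res ω ∪ σ) ∈ simComp C :=
          iota_last_mem_simComp.mp (by rw [← hu]; exact hub)
        refine ⟨dup (insert 0 (res ω)), Set.mem_image_of_mem _ ⟨hmem, ?_, ?_⟩, ?_⟩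
        · rw [Finset.eq_empty_iff_forall_notMem]
          intro x hx
          obtain ⟨hx1, hx2⟩ := Finset.mem_inter.mp hx
          rcases Finset.mem_insert.mp hx1 with rfl | h'
          · exact h0 hx2
          · exact hresd x h' hx2
        · rw [Finset.insert_union]; exact humem
        · rw [dup, if_pos (Finset.mem_insert_self _ _)]
          conv_lhs => rw [hωeq]
          exact Finset.union_subset_union_left
            (iota_subset_iota.mpr (Finset.subset_insert _ _))
      · -- ω = iota (res ω)
        have hωeq : ω = iota (res ω) := eq_iota_res hlast
        have hu : ω ∪ iota σ = iota (res ω ∪ σ) := by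
          conv_lhs => rw [hωeq]
          rw [iota_union]
        refine ⟨dup (res ω), Set.mem_image_of_mem _
          ⟨iota_mem_simComp.mp (by rw [← hωeq]; exact hω), ?_, ?_⟩, ?_⟩
        · rw [Finset.eq_empty_iff_forall_notMem]
          intro x hx
          obtain ⟨hx1, hx2⟩ := Finset.mem_inter.mp hx
          exact hd (mem_res.mp hx1) (castSucc_mem_iota.mpr hx2)
        · exact iota_mem_simComp.mp (by rw [← hu]; exact hub)
        · conv_lhs => rw [hωeq]
          exact iota_subset_dup _
    · rintro ⟨τ, ⟨ω₀, ⟨h1, h2, h3⟩, rfl⟩, hsub⟩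
      have hd2 := Finset.disjoint_left.mp (Finset.disjoint_iff_inter_eq_empty.mpr h2)
      have hdup : dup ω₀ ∈ simComp (dup '' C) := by
        obtain ⟨b, hb, hab⟩ := h1
        exact ⟨dup b, Set.mem_image_of_mem _ hb, dup_mono hab⟩
      refine ⟨simComp_down hsub hdup, ?_, ?_⟩
      · rw [Finset.eq_empty_iff_forall_notMem]
        intro x hx
        obtain ⟨hx1, hx2⟩ := Finset.mem_inter.mp hx
        have hx1' : x ∈ dup ω₀ := hsub hx1
        rw [hdσ] at hx2
        unfold dup at hx1'
        split_ifs at hx1' with h'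
        · rcases Finset.mem_union.mp hx1' with h'' | h''
          · obtain ⟨y, hy, rfl⟩ := Finset.mem_image.mp h''
            exact hd2 hy (castSucc_mem_iota.mp hx2)
          · rw [Finset.mem_singleton.mp h''] at hx2
            exact last_notMem_iota σ hx2
        · obtain ⟨y, hy, rfl⟩ := Finset.mem_image.mp hx1'
          exact hd2 hy (castSucc_mem_iota.mp hx2)
      · have hsub2 : ω ∪ dup σ ⊆ dup (ω₀ ∪ σ) := by
          rw [hdσ]
          exact Finset.union_subset (hsub.trans (dup_mono Finset.subset_union_left))
            ((iota_subset_iota.mpr Finset.subset_union_right).trans (iota_subset_dup _))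
        refine simComp_down hsub2 ?_
        obtain ⟨b, hb, hab⟩ := h3
        exact ⟨dup b, Set.mem_image_of_mem _ hb, dup_mono hab⟩
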